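/- Multi-source weighted bound (Theorem 1 of the paper): given K client distributions T_1,...,T_K with labeling functions f_1,...,f_K : X → [0,1], a server distribution S with pseudo-labeling function f̂_s : X → [0,1], convex weights λ_1,...,λ_K ≥ 0 with Σ_k λ_k = 1, and any hypothesis h : X → [0,1], it holds that Σ_k λ_k E_{x~T_k}[|h(x) - f_k(x)|] ≤ E_{x~S}[|h(x) - f̂_s(x)|] + Σ_k λ_k d1(S, T_k) + min{ Σ_k λ_k E_{x~S}[|f̂_s(x) - f_k(x)|], Σ_k λ_k E_{x~T_k}[|f̂_s(x) - f_k(x)|] }. -/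

import Mathlib

/-! For `0 ≤ g ≤ M`, the layer-cake formula writes `∫ g ∂T - ∫ g ∂S` as
`∫ t in (0, M], (T {t ≤ g} - S {t ≤ g})`, which is at most `M · sup_B |S B - T B| = M · d1(S, T) / 2`.
Applied to `|h - f̂_s|` and combined with the triangle inequality `|h - f_k| ≤ |h - f̂_s| + |f̂_s - f_k|`
under `T_k`, or applied to `|h - f_k|` and combined with the triangle inequality under `S`, this gives
two bounds for each `k`; averaging each with the weights `λ_k` gives the two arguments of the `min`. -/

open MeasureTheory Set

noncomputable def L1dist {X : Type*} [MeasurableSpace X] (D1 D2 : Measure X) : ℝ :=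
  2 * ⨆ B : {s : Set X // MeasurableSet s}, |(D1 B.1).toReal - (D2 B.1).toReal|

section

variable {X : Type*} [MeasurableSpace X]

lemma L1dist_nonneg (S T : Measure X) : 0 ≤ L1dist S T :=
  mul_nonneg zero_le_two (Real.iSup_nonneg fun _ => abs_nonneg _)

lemma abs_measureReal_sub_le_half_L1dist (S T : Measure X) [IsFiniteMeasure S]
    [IsFiniteMeasure T] {B : Set X} (hB : MeasurableSet B) :
    |S.real B - T.real B| ≤ L1dist S T / 2 := by
  have hbdd : BddAbove (range fun B : {s : Set X // MeasurableSet s} =>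
      |(S B.1).toReal - (T B.1).toReal|) := by
    refine ⟨S.real univ + T.real univ, ?_⟩
    rintro _ ⟨B, rfl⟩
    have hS : S.real B.1 ≤ S.real univ := measureReal_mono (subset_univ _)
    have hT : T.real B.1 ≤ T.real univ := measureReal_mono (subset_univ _)
    have hS0 : 0 ≤ S.real B.1 := measureReal_nonneg
    have hT0 : 0 ≤ T.real B.1 := measureReal_nonneg
    simp only [← measureReal_def]
    rw [abs_sub_le_iff]
    constructor <;> linarith
  have : |S.real B - T.real B| ≤ _ := le_ciSup hbdd ⟨B, hB⟩
  rw [L1dist]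
  linarith

lemma integrable_of_forall_mem_Icc {μ : Measure X} [IsFiniteMeasure μ] {g : X → ℝ}
    (hg : Measurable g) {a b : ℝ} (hab : ∀ x, g x ∈ Icc a b) : Integrable g μ :=
  .of_bound hg.aestronglyMeasurable (max |a| |b|)
    (ae_of_all _ fun x => abs_le_max_abs_abs (hab x).1 (hab x).2)

lemma integral_le_integral_add_mul_half_L1dist (S T : Measure X) [IsFiniteMeasure S]
    [IsFiniteMeasure T] {g : X → ℝ} (hg : Measurable g) {M : ℝ} (hM : 0 ≤ M)
    (hgM : ∀ x, g x ∈ Icc 0 M) :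
    ∫ x, g x ∂T ≤ ∫ x, g x ∂S + M * (L1dist S T / 2) := by
  have layerCake : ∀ (μ : Measure X) [IsFiniteMeasure μ],
      ∫ x, g x ∂μ = ∫ t in Ioc 0 M, μ.real {x | t ≤ g x} := fun μ _ =>
    (integrable_of_forall_mem_Icc hg hgM).integral_eq_integral_Ioc_meas_le
      (ae_of_all _ fun x => (hgM x).1) (ae_of_all _ fun x => (hgM x).2)
  have hS_int : IntegrableOn (fun t => S.real {x | t ≤ g x}) (Ioc 0 M) := by
    have hanti : Antitone fun t => S.real {x | t ≤ g x} :=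
      fun s t hst => measureReal_mono fun x hx => hst.trans hx
    refine Measure.integrableOn_of_bounded (M := S.real univ) (by simp)
      hanti.measurable.aestronglyMeasurable (ae_of_all _ fun t => ?_)
    rw [Real.norm_eq_abs, abs_of_nonneg measureReal_nonneg]
    exact measureReal_mono (subset_univ _)
  rw [layerCake T, layerCake S]
  calc ∫ t in Ioc 0 M, T.real {x | t ≤ g x}
      ≤ ∫ t in Ioc 0 M, (S.real {x | t ≤ g x} + L1dist S T / 2) := by
        refine integral_mono_of_nonneg (ae_of_all _ fun _ => measureReal_nonneg)
          (hS_int.add (integrableOn_const (by simp))) (ae_of_all _ fun t => ?_)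
        have hB : MeasurableSet {x | t ≤ g x} := hg measurableSet_Ici
        have := abs_sub_le_iff.mp (abs_measureReal_sub_le_half_L1dist S T hB)
        show T.real {x | t ≤ g x} ≤ S.real {x | t ≤ g x} + L1dist S T / 2
        linarith [this.2]
    _ = (∫ t in Ioc 0 M, S.real {x | t ≤ g x}) + M * (L1dist S T / 2) := by
        rw [integral_add hS_int (integrableOn_const (by simp)), setIntegral_const]
        simp [hM]

variable {S T : Measure X} [IsFiniteMeasure S] [IsFiniteMeasure T] {u v w : X → ℝ}

lemma integral_abs_sub_le_integral_add_L1dist (hu : Measurable u) (hv : Measurable v)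
    (hu01 : ∀ x, u x ∈ Icc (0 : ℝ) 1) (hv01 : ∀ x, v x ∈ Icc (0 : ℝ) 1) :
    ∫ x, |u x - v x| ∂T ≤ ∫ x, |u x - v x| ∂S + L1dist S T := by
  have h01 : ∀ x, |u x - v x| ∈ Icc (0 : ℝ) 1 := fun x =>
    ⟨abs_nonneg _, abs_sub_le_of_nonneg_of_le (hu01 x).1 (hu01 x).2 (hv01 x).1 (hv01 x).2⟩
  have := integral_le_integral_add_mul_half_L1dist S T (g := fun x => |u x - v x|)
    (hu.sub hv).abs zero_le_one h01
  linarith [L1dist_nonneg S T]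

lemma integral_abs_sub_le_add {μ : Measure X} (hu : Integrable u μ) (hv : Integrable v μ) (hw : Integrable w μ) :
    ∫ x, |u x - w x| ∂μ ≤ ∫ x, |u x - v x| ∂μ + ∫ x, |v x - w x| ∂μ := by
  have huv : Integrable (fun x => |u x - v x|) μ := (hu.sub hv).abs
  have hvw : Integrable (fun x => |v x - w x|) μ := (hv.sub hw).abs
  rw [← integral_add huv hvw]
  exact integral_mono_of_nonneg (ae_of_all _ fun _ => abs_nonneg _) (huv.add hvw)
    (ae_of_all _ fun x => abs_sub_le _ _ _)

variable (hu : Measurable u) (hv : Measurable v) (hw : Measurable w)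
  (hu01 : ∀ x, u x ∈ Icc (0 : ℝ) 1) (hv01 : ∀ x, v x ∈ Icc (0 : ℝ) 1)
  (hw01 : ∀ x, w x ∈ Icc (0 : ℝ) 1)
include hu hv hw hu01 hv01 hw01

lemma integral_abs_sub_le_add_L1dist_add_target :
    ∫ x, |u x - w x| ∂T ≤ ∫ x, |u x - v x| ∂S + L1dist S T + ∫ x, |v x - w x| ∂T := by
  have := integral_abs_sub_le_add (μ := T) (integrable_of_forall_mem_Icc hu hu01)
    (integrable_of_forall_mem_Icc hv hv01) (integrable_of_forall_mem_Icc hw hw01)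
  linarith [integral_abs_sub_le_integral_add_L1dist (S := S) (T := T) hu hv hu01 hv01]

lemma integral_abs_sub_le_add_L1dist_add_source :
    ∫ x, |u x - w x| ∂T ≤ ∫ x, |u x - v x| ∂S + L1dist S T + ∫ x, |v x - w x| ∂S := by
  have := integral_abs_sub_le_add (μ := S) (integrable_of_forall_mem_Icc hu hu01)
    (integrable_of_forall_mem_Icc hv hv01) (integrable_of_forall_mem_Icc hw hw01)
  linarith [integral_abs_sub_le_integral_add_L1dist (S := S) (T := T) hu hw hu01 hw01]

end

lemma sum_mul_le_add_sum_mul_add_sum_mul {ι : Type*} [Fintype ι] {lam a b d : ι → ℝ} {c : ℝ}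
    (hlam : ∀ k, 0 ≤ lam k) (hlam1 : ∑ k, lam k = 1) (h : ∀ k, a k ≤ c + b k + d k) :
    ∑ k, lam k * a k ≤ c + ∑ k, lam k * b k + ∑ k, lam k * d k :=
  calc ∑ k, lam k * a k ≤ ∑ k, lam k * (c + b k + d k) :=
        Finset.sum_le_sum fun k _ => mul_le_mul_of_nonneg_left (h k) (hlam k)
    _ = c + ∑ k, lam k * b k + ∑ k, lam k * d k := by
        simp only [mul_add, Finset.sum_add_distrib, ← Finset.sum_mul, hlam1, one_mul]

theorem stmt_4 {X : Type*} [MeasurableSpace X] {K : ℕ}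
    (S : Measure X) [IsProbabilityMeasure S]
    (T : Fin K → Measure X) [∀ k, IsProbabilityMeasure (T k)]
    (h fs : X → ℝ) (f : Fin K → X → ℝ)
    (hh : Measurable h) (hfs : Measurable fs) (hf : ∀ k, Measurable (f k))
    (hh01 : ∀ x, h x ∈ Icc (0:ℝ) 1) (hfs01 : ∀ x, fs x ∈ Icc (0:ℝ) 1)
    (hf01 : ∀ k x, f k x ∈ Icc (0:ℝ) 1)
    (lam : Fin K → ℝ) (hlam : ∀ k, 0 ≤ lam k) (hlam1 : ∑ k, lam k = 1) :
    ∑ k, lam k * ∫ x, |h x - f k x| ∂(T k) ≤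
      ∫ x, |h x - fs x| ∂S + ∑ k, lam k * L1dist S (T k) +
        min (∑ k, lam k * ∫ x, |fs x - f k x| ∂S)
            (∑ k, lam k * ∫ x, |fs x - f k x| ∂(T k)) := by
  rw [← min_add_add_left]
  exact le_min
    (sum_mul_le_add_sum_mul_add_sum_mul hlam hlam1 fun k =>
      integral_abs_sub_le_add_L1dist_add_source hh hfs (hf k) hh01 hfs01 (hf01 k))
    (sum_mul_le_add_sum_mul_add_sum_mul hlam hlam1 fun k =>
      integral_abs_sub_le_add_L1dist_add_target hh hfs (hf k) hh01 hfs01 (hf01 k))
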